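/- Let ρ(z) = Σᵢ 1/(z − wᵢ) for distinct complex numbers w₁,…,w_n satisfying the su(2) vacuum equations k/wᵢ − Σ_{j≠i} 2/(wᵢ−wⱼ) + c = 0 (with all wᵢ ≠ 0). Then ρ satisfies the Riccati-type equation ρ(z)² + ρ'(z) − (c + k/z)·ρ(z) + c·n/z = 0 for all z not in {0, w₁, …, w_n}. -/

import Mathlib

open Finset

/-- Swap the indices in a double sum over off-diagonal pairs. -/
theorem swap_offdiag_sum {M : Type*} [AddCommMonoid M] (n : ℕ) (g : Fin n → Fin n → M) :
    ∑ i : Fin n, ∑ j ∈ Finset.univ.erase i, g i j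
      = ∑ i : Fin n, ∑ j ∈ Finset.univ.erase i, g j i := by
  rw [Finset.sum_comm' (s' := fun j : Fin n => Finset.univ.erase j)
      (t' := (Finset.univ : Finset (Fin n)))]
  intro x y
  constructor <;> intro h <;> simp_all [Finset.mem_erase] <;> tauto

/-- The resolvent `ρ(z) = Σᵢ 1/(z − wᵢ)` of a solution of the su(2) vacuum
equations `k/wᵢ − Σ_{j≠i} 2/(wᵢ−wⱼ) + c = 0` satisfies
`ρ'(z) = −Σᵢ 1/(z−wᵢ)²` and the Riccati-type equation
`ρ(z)² + ρ'(z) − (c + k/z)·ρ(z) + c·n/z = 0`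
for all `z ∉ {0, w₁, …, w_n}`. -/
theorem resolvent_riccati (n k : ℕ) (hk : 0 < k) (c : ℂ) (hc : c ≠ 0)
    (w : Fin n → ℂ) (hw : Function.Injective w) (hw0 : ∀ i, w i ≠ 0)
    (hvac : ∀ i : Fin n,
      (k : ℂ) / w i - (∑ j ∈ Finset.univ.erase i, 2 / (w i - w j)) + c = 0) :
    ∀ z : ℂ, z ≠ 0 → (∀ i, z ≠ w i) →
      HasDerivAt (fun z : ℂ => ∑ i : Fin n, 1 / (z - w i))
        (-∑ i : Fin n, 1 / (z - w i) ^ 2) z ∧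
      (∑ i : Fin n, 1 / (z - w i)) ^ 2 + (-∑ i : Fin n, 1 / (z - w i) ^ 2)
        - (c + (k : ℂ) / z) * (∑ i : Fin n, 1 / (z - w i)) + c * n / z = 0 := by
  intro z hz hzw
  have hzwne : ∀ i, z - w i ≠ 0 := fun i => sub_ne_zero.mpr (hzw i)
  have hwne : ∀ i j : Fin n, i ≠ j → w i - w j ≠ 0 := fun i j h =>
    sub_ne_zero.mpr (fun e => h (hw e))
  constructor
  · have hd : ∀ i ∈ (Finset.univ : Finset (Fin n)),
        HasDerivAt (fun z : ℂ => 1 / (z - w i)) (-(1 / (z - w i) ^ 2)) z := by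
      intro i _
      have h := ((hasDerivAt_id z).sub_const (w i)).fun_inv (hzwne i)
      simpa [one_div, neg_div] using h
    have h := HasDerivAt.fun_sum hd
    simpa using h
  · -- vacuum equations, rewritten
    have hvac' : ∀ i : Fin n,
        (∑ j ∈ Finset.univ.erase i, (2 : ℂ) / (w i - w j)) = (k : ℂ) / w i + c := by
      intro i
      have h := hvac i
      linear_combination -h
    -- sum of k/w i equals -c*n
    have hsumvac : (∑ i : Fin n, (k : ℂ) / w i) = -c * n := by
      have hS : ∑ i : Fin n, ∑ j ∈ Finset.univ.erase i, (2 : ℂ) / (w i - w j)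
          = -(∑ i : Fin n, ∑ j ∈ Finset.univ.erase i, (2 : ℂ) / (w i - w j)) := by
        calc ∑ i : Fin n, ∑ j ∈ Finset.univ.erase i, (2 : ℂ) / (w i - w j)
            = ∑ i : Fin n, ∑ j ∈ Finset.univ.erase i, (2 : ℂ) / (w j - w i) :=
              swap_offdiag_sum n (fun i j => (2 : ℂ) / (w i - w j))
          _ = ∑ i : Fin n, ∑ j ∈ Finset.univ.erase i, -((2 : ℂ) / (w i - w j)) := by
              refine Finset.sum_congr rfl fun i _ => Finset.sum_congr rfl fun j hj => ?_
              have hji : j ≠ i := (Finset.mem_erase.mp hj).1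
              field_simp [hwne i j hji.symm, hwne j i hji]
              ring
          _ = -∑ i : Fin n, ∑ j ∈ Finset.univ.erase i, (2 : ℂ) / (w i - w j) := by
              simp
      have h0 : ∑ i : Fin n, ∑ j ∈ Finset.univ.erase i, (2 : ℂ) / (w i - w j) = 0 := by
        linear_combination hS / 2
      have h0' : ∑ i : Fin n, ((k : ℂ) / w i + c) = 0 := by
        rw [← Finset.sum_congr rfl (fun i _ => hvac' i)]
        exact h0
      rw [Finset.sum_add_distrib, Finset.sum_const, Finset.card_univ, Fintype.card_fin,
        nsmul_eq_mul] at h0'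
      linear_combination h0'
    -- partial fractions for the off-diagonal sum
    have hD : ∑ i : Fin n, ∑ j ∈ Finset.univ.erase i, (1 / (z - w i)) * (1 / (z - w j))
        = ∑ i : Fin n, ((k : ℂ) / w i + c) * (1 / (z - w i)) := by
      calc ∑ i : Fin n, ∑ j ∈ Finset.univ.erase i, (1 / (z - w i)) * (1 / (z - w j))
          = ∑ i : Fin n, ∑ j ∈ Finset.univ.erase i,
              ((1 / (w i - w j)) * (1 / (z - w i)) - (1 / (w i - w j)) * (1 / (z - w j))) := by
            refine Finset.sum_congr rfl fun i _ => Finset.sum_congr rfl fun j hj => ?_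
            have hji : j ≠ i := (Finset.mem_erase.mp hj).1
            field_simp [hwne i j hji.symm, hzwne i, hzwne j]
            ring
        _ = (∑ i : Fin n, ∑ j ∈ Finset.univ.erase i, (1 / (w i - w j)) * (1 / (z - w i)))
            - ∑ i : Fin n, ∑ j ∈ Finset.univ.erase i, (1 / (w i - w j)) * (1 / (z - w j)) := by
            simp [Finset.sum_sub_distrib]
        _ = (∑ i : Fin n, ∑ j ∈ Finset.univ.erase i, (1 / (w i - w j)) * (1 / (z - w i)))
            - ∑ i : Fin n, ∑ j ∈ Finset.univ.erase i, (1 / (w j - w i)) * (1 / (z - w i)) := by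
            rw [swap_offdiag_sum n (fun i j => (1 / (w i - w j)) * (1 / (z - w j)))]
        _ = ∑ i : Fin n, ∑ j ∈ Finset.univ.erase i, ((2 : ℂ) / (w i - w j)) * (1 / (z - w i)) := by
            rw [← Finset.sum_sub_distrib]
            refine Finset.sum_congr rfl fun i _ => ?_
            rw [← Finset.sum_sub_distrib]
            refine Finset.sum_congr rfl fun j hj => ?_
            have hji : j ≠ i := (Finset.mem_erase.mp hj).1
            field_simp [hwne i j hji.symm, hwne j i hji, hzwne i]
            ring
        _ = ∑ i : Fin n, (∑ j ∈ Finset.univ.erase i, (2 : ℂ) / (w i - w j)) * (1 / (z - w i)) := by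
            simp [Finset.sum_mul]
        _ = ∑ i : Fin n, ((k : ℂ) / w i + c) * (1 / (z - w i)) := by
            refine Finset.sum_congr rfl fun i _ => ?_
            rw [hvac' i]
    -- square of the resolvent minus diagonal
    have E1 : (∑ i : Fin n, 1 / (z - w i)) ^ 2 + (-∑ i : Fin n, 1 / (z - w i) ^ 2)
        = ∑ i : Fin n, ((k : ℂ) / w i + c) * (1 / (z - w i)) := by
      have hsq : (∑ i : Fin n, 1 / (z - w i)) ^ 2
          = ∑ i : Fin n, ∑ j : Fin n, (1 / (z - w i)) * (1 / (z - w j)) := by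
        rw [sq, Finset.sum_mul_sum]
      have hdiag : ∀ i : Fin n, ∑ j : Fin n, (1 / (z - w i)) * (1 / (z - w j))
          = 1 / (z - w i) ^ 2
            + ∑ j ∈ Finset.univ.erase i, (1 / (z - w i)) * (1 / (z - w j)) := by
        intro i
        rw [← Finset.add_sum_erase _ _ (Finset.mem_univ i)]
        congr 1
        rw [div_mul_div_comm, one_mul, sq]
      rw [hsq, Finset.sum_congr rfl (fun i _ => hdiag i), Finset.sum_add_distrib, hD]
      ring
    have hfinal : ∀ i : Fin n,
        ((k : ℂ) / w i + c) * (1 / (z - w i)) - (c + (k : ℂ) / z) * (1 / (z - w i))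
          = (k : ℂ) / w i * (1 / z) := by
      intro i
      field_simp [hw0 i, hzwne i]
      ring
    have E2 : (∑ i : Fin n, ((k : ℂ) / w i + c) * (1 / (z - w i)))
        - (c + (k : ℂ) / z) * (∑ i : Fin n, 1 / (z - w i)) = -c * n / z := by
      rw [Finset.mul_sum, ← Finset.sum_sub_distrib,
        Finset.sum_congr rfl (fun i _ => hfinal i), ← Finset.sum_mul, hsumvac]
      ring
    linear_combination E1 + E2
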